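/- Let M = {w₁, …, w_m} be a set of nontrivial freely reduced words in the free group F on a finite set X. Then M is Nielsen reduced if and only if: (1) for each w_i, both the major initial segment and the major terminal segment of w_i are isolated; and (2) for each w_i of even free length, either its left half or its right half is isolated. -/

import Mathlib

/-- A subset `U` of a free group is *Nielsen reduced* if for all
`v₁, v₂, v₃ ∈ U ∪ U⁻¹` the conditions (N0), (N1), (N2) hold. -/
def NielsenReduced {X : Type*} [DecidableEq X] (U : Set (FreeGroup X)) : Prop :=
  ∀ v₁ ∈ U ∪ U⁻¹, ∀ v₂ ∈ U ∪ U⁻¹, ∀ v₃ ∈ U ∪ U⁻¹,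
    v₁ ≠ 1 ∧
    (v₁ * v₂ ≠ 1 → v₁.norm ≤ (v₁ * v₂).norm ∧ v₂.norm ≤ (v₁ * v₂).norm) ∧
    (v₁ * v₂ ≠ 1 → v₂ * v₃ ≠ 1 →
      (v₁.norm : ℤ) - (v₂.norm : ℤ) + (v₃.norm : ℤ) < ((v₁ * v₂ * v₃).norm : ℤ))

/-- `s` is an initial segment of `w`: the reduced word of `s` is a prefix of the
reduced word of `w`. -/
def InitSeg {X : Type*} [DecidableEq X] (s w : FreeGroup X) : Prop :=
  s.toWord <+: w.toWord

/-- `s` is a terminal segment of `w`: the reduced word of `s` is a suffix of the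
reduced word of `w`. -/
def TermSeg {X : Type*} [DecidableEq X] (s w : FreeGroup X) : Prop :=
  s.toWord <:+ w.toWord

/-- The `w`-symbols of a set `M` are the elements of `M` together with their inverses. -/
def Symbols {X : Type*} (M : Set (FreeGroup X)) : Set (FreeGroup X) := M ∪ M⁻¹

/-- The initial segment `s` of the `w`-symbol `w` is *isolated* (w.r.t. `M`) if it does
not occur as an initial segment of any other `w`-symbol. -/
def IsolatedInit {X : Type*} [DecidableEq X] (M : Set (FreeGroup X))
    (s w : FreeGroup X) : Prop :=
  ∀ v ∈ Symbols M, InitSeg s v → v = w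

/-- The terminal segment `s` of the `w`-symbol `w` is *isolated* (w.r.t. `M`) if it is
a terminal segment of no other `w`-symbol. -/
def IsolatedTerm {X : Type*} [DecidableEq X] (M : Set (FreeGroup X))
    (s w : FreeGroup X) : Prop :=
  ∀ v ∈ Symbols M, TermSeg s v → v = w

/-! If a major initial segment `s` of `u` is also an initial segment of a symbol `v ≠ u`, then
`|u⁻¹ v| ≤ |u| + |v| - 2|s| < |v|`, violating (N1); if the left half of `w` starts `u ≠ w` and
its right half ends `v ≠ w`, then `|u⁻¹ w v⁻¹| ≤ |u| - |w| + |v|`, violating (N2).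

For the other direction write `u = p c`, `v = c⁻¹ q` with `uv = p q` reduced. The inequality
`|v| ≤ |uv|` fails exactly when `c` is longer than half of `u`; then `c` contains a major terminal
segment of `u` that is also a terminal segment of the symbol `v⁻¹ ≠ u`. Given (N1), the parts of
`v₂` cancelled in `v₁ v₂` and in `v₂ v₃` are each at most half of `v₂`, and (N2) fails exactly
when nothing of `v₂` survives in `v₁ v₂ v₃`: then the left half of `v₂` is an initial segment of
`v₁⁻¹` and its right half a terminal segment of `v₃⁻¹`. -/

namespace FreeGroup

variable {α : Type*} [DecidableEq α] {L L' : List (α × Bool)}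

theorem reduce_eq_of_red (h : Red L L') (h' : IsReduced L') : reduce L = L' :=
  (reduce.eq_of_red h).trans h'.reduce_eq

theorem exists_reduce_append_eq {L₁ L₂ : List (α × Bool)} (h₁ : IsReduced L₁)
    (h₂ : IsReduced L₂) :
    ∃ p c q, L₁ = p ++ c ∧ L₂ = invRev c ++ q ∧ reduce (L₁ ++ L₂) = p ++ q := by
  induction L₁ with
  | nil => exact ⟨[], [], L₂, rfl, by simp [invRev], h₂.reduce_eq⟩
  | cons a t ih =>
    obtain ⟨p, c, q, rfl, rfl, hred⟩ := ih (h₁.infix (List.suffix_cons a _).isInfix)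
    have hred' : IsReduced (p ++ q) := hred ▸ .of_reduce_eq reduce.idem
    have hstep : Red (a :: (p ++ c ++ (invRev c ++ q))) (a :: (p ++ q)) :=
      hred ▸ reduce.red.cons_cons
    rcases p with _ | ⟨b, p⟩
    · rcases q with _ | ⟨b, q⟩
      · exact ⟨[a], c, [], rfl, by simp, reduce_eq_of_red hstep .singleton⟩
      · by_cases hab : b = (a.1, !a.2)
        · subst hab
          refine ⟨[], a :: c, q, rfl, by simp [invRev], reduce_eq_of_red ?_ (hred'.infix ?_)⟩
          · exact hstep.tail Red.Step.cons_not
          · exact (List.suffix_cons _ _).isInfix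
        · refine ⟨[a], c, b :: q, rfl, rfl, reduce_eq_of_red hstep ?_⟩
          refine isReduced_cons_cons.2 ⟨fun h => ?_, hred'⟩
          obtain ⟨x, u⟩ := a; obtain ⟨y, v⟩ := b
          cases u <;> cases v <;> simp_all
    · refine ⟨a :: b :: p, c, q, rfl, rfl, reduce_eq_of_red hstep ?_⟩
      have hab : IsReduced ([a] ++ b :: p) := h₁.infix ⟨[], c, by simp⟩
      simpa using hab.append_overlap hred' (List.cons_ne_nil _ _)

theorem exists_toWord_mul_eq (x y : FreeGroup α) :
    ∃ p c q, x.toWord = p ++ c ∧ y.toWord = invRev c ++ q ∧ (x * y).toWord = p ++ q := by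
  rw [toWord_mul]
  exact exists_reduce_append_eq isReduced_toWord isReduced_toWord

theorem toWord_mk_of_isInfix {w : FreeGroup α} (h : L <:+: w.toWord) : (mk L).toWord = L := by
  rw [toWord_mk, (isReduced_toWord.infix h).reduce_eq]

theorem eq_mk_of_toWord_eq {w : FreeGroup α} (h : w.toWord = L) : w = mk L := by
  rw [← h, mk_toWord]

theorem toWord_mul_mul_eq {x y z : FreeGroup α} {p c m d q : List (α × Bool)}
    (hxy : (x * y).toWord = p ++ m ++ d) (hy : y.toWord = invRev c ++ m ++ d)
    (hyz : (y * z).toWord = invRev c ++ m ++ q) (hm : m ≠ []) :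
    (x * y * z).toWord = p ++ m ++ q := by
  have hxyz : x * y * z = mk (p ++ m ++ q) := by
    have key : x * y * z = (x * y) * y⁻¹ * (y * z) := by group
    rw [key, eq_mk_of_toWord_eq hxy, eq_mk_of_toWord_eq hyz, eq_mk_of_toWord_eq hy]
    simp only [← mul_mk, ← inv_mk]
    group
  have hpm : IsReduced (p ++ m) := (isReduced_toWord (x := x * y)).infix ⟨[], d, by simp [hxy]⟩
  have hmq : IsReduced (m ++ q) :=
    (isReduced_toWord (x := y * z)).infix ⟨invRev c, [], by simp [hyz]⟩
  rw [hxyz, toWord_mk, (hpm.append_overlap hmq hm).reduce_eq]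

end FreeGroup

theorem List.exists_eq_append_append_of_append_eq_append {β : Type*} {A B C D : List β}
    (h : A ++ B = C ++ D) (hl : A.length + D.length ≤ (A ++ B).length) :
    ∃ m, A ++ B = A ++ m ++ D := by
  rcases List.append_eq_append_iff.1 h with ⟨m, rfl, rfl⟩ | ⟨m, rfl, rfl⟩
  · exact ⟨m, by simp⟩
  · simp only [List.length_append] at hl
    obtain rfl : m = [] := List.length_eq_zero_iff.1 (by omega)
    exact ⟨[], by simp⟩

open FreeGroup

section Segments

variable {X : Type*} [DecidableEq X] {s u v w : FreeGroup X}

theorem InitSeg.inv (h : InitSeg s w) : TermSeg s⁻¹ w⁻¹ := by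
  obtain ⟨t, ht⟩ := h
  exact ⟨invRev t, by rw [toWord_inv, toWord_inv, ← ht, invRev_append]⟩

theorem TermSeg.inv (h : TermSeg s w) : InitSeg s⁻¹ w⁻¹ := by
  obtain ⟨t, ht⟩ := h
  exact ⟨invRev t, by rw [toWord_inv, toWord_inv, ← ht, invRev_append]⟩

theorem initSeg_mk {L : List (X × Bool)} (h : L <+: w.toWord) : InitSeg (mk L) w := by
  rwa [InitSeg, toWord_mk_of_isInfix h.isInfix]

theorem termSeg_mk {L : List (X × Bool)} (h : L <:+ w.toWord) : TermSeg (mk L) w := by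
  rwa [TermSeg, toWord_mk_of_isInfix h.isInfix]

theorem InitSeg.norm_inv_mul_add (h : InitSeg s w) : (s⁻¹ * w).norm + s.norm = w.norm := by
  obtain ⟨r, hr⟩ := h
  have hw : s⁻¹ * w = mk r := by
    rw [eq_mk_of_toWord_eq hr.symm, ← mul_mk, mk_toWord, inv_mul_cancel_left]
  rw [hw, FreeGroup.norm, FreeGroup.norm, FreeGroup.norm,
    toWord_mk_of_isInfix (w := w) ⟨s.toWord, [], by simp [hr]⟩, ← hr, List.length_append, add_comm]

theorem TermSeg.norm_mul_inv_add (h : TermSeg s w) : (w * s⁻¹).norm + s.norm = w.norm := by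
  have := h.inv.norm_inv_mul_add
  rwa [show s⁻¹⁻¹ * w⁻¹ = (w * s⁻¹)⁻¹ by group, norm_inv_eq, norm_inv_eq, norm_inv_eq] at this

theorem norm_inv_mul_add_le_of_initSeg (hu : InitSeg s u) (hv : InitSeg s v) :
    (u⁻¹ * v).norm + 2 * s.norm ≤ u.norm + v.norm := by
  have h : u⁻¹ * v = (s⁻¹ * u)⁻¹ * (s⁻¹ * v) := by group
  have := norm_mul_le (s⁻¹ * u)⁻¹ (s⁻¹ * v)
  rw [← h, norm_inv_eq] at this
  linarith [hu.norm_inv_mul_add, hv.norm_inv_mul_add]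

theorem mul_eq_of_halves {s₁ s₂ : FreeGroup X} (h₁ : InitSeg s₁ w) (h₂ : TermSeg s₂ w)
    (hl₁ : 2 * s₁.norm = w.norm) (hl₂ : 2 * s₂.norm = w.norm) : s₁ * s₂ = w := by
  obtain ⟨r₁, hr₁⟩ := h₁
  obtain ⟨r₂, hr₂⟩ := h₂
  have hlen : s₁.toWord.length = r₂.length := by
    have := congrArg List.length hr₂
    simp only [List.length_append] at this
    simp only [FreeGroup.norm] at hl₁ hl₂
    omega
  obtain ⟨rfl, -⟩ := List.append_inj (hr₁.trans hr₂.symm) hlen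
  rw [eq_mk_of_toWord_eq hr₂.symm, ← mul_mk, mk_toWord, mk_toWord]

end Segments

section Symbols

variable {X : Type*} {M : Set (FreeGroup X)} {v : FreeGroup X}

theorem inv_mem_symbols (h : v ∈ Symbols M) : v⁻¹ ∈ Symbols M := by
  rcases h with h | h
  · exact Or.inr (by simpa using h)
  · exact Or.inl h

theorem forall_mem_symbols {P : FreeGroup X → Prop} :
    (∀ u ∈ Symbols M, P u) ↔ ∀ w ∈ M, P w ∧ P w⁻¹ := by
  refine ⟨fun h w hw => ⟨h w (Or.inl hw), h _ (inv_mem_symbols (Or.inl hw))⟩, ?_⟩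
  rintro h u (hu | hu)
  · exact (h u hu).1
  · simpa using (h u⁻¹ hu).2

end Symbols

section Isolation

variable {X : Type*} [DecidableEq X] {M : Set (FreeGroup X)} {s w : FreeGroup X}

def MajorInitIsolated (M : Set (FreeGroup X)) (w : FreeGroup X) : Prop :=
  ∀ s, InitSeg s w → w.norm < 2 * s.norm → 2 * s.norm ≤ w.norm + 2 → IsolatedInit M s w

def MajorTermIsolated (M : Set (FreeGroup X)) (w : FreeGroup X) : Prop :=
  ∀ s, TermSeg s w → w.norm < 2 * s.norm → 2 * s.norm ≤ w.norm + 2 → IsolatedTerm M s w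

def HalfIsolated (M : Set (FreeGroup X)) (w : FreeGroup X) : Prop :=
  (∀ s, InitSeg s w → 2 * s.norm = w.norm → IsolatedInit M s w) ∨
    (∀ s, TermSeg s w → 2 * s.norm = w.norm → IsolatedTerm M s w)

theorem IsolatedInit.inv (h : IsolatedInit M s w) : IsolatedTerm M s⁻¹ w⁻¹ :=
  fun v hv hsv => inv_eq_iff_eq_inv.1 (h v⁻¹ (inv_mem_symbols hv) (by simpa using hsv.inv))

theorem IsolatedTerm.inv (h : IsolatedTerm M s w) : IsolatedInit M s⁻¹ w⁻¹ :=
  fun v hv hsv => inv_eq_iff_eq_inv.1 (h v⁻¹ (inv_mem_symbols hv) (by simpa using hsv.inv))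

theorem MajorInitIsolated.inv (h : MajorInitIsolated M w) : MajorTermIsolated M w⁻¹ := by
  intro s hs hlt hle
  simpa using (h s⁻¹ (by simpa using hs.inv) (by simpa using hlt) (by simpa using hle)).inv

theorem HalfIsolated.inv (h : HalfIsolated M w) : HalfIsolated M w⁻¹ := by
  rcases h with h | h
  · exact Or.inr fun s hs hl => by
      simpa using (h s⁻¹ (by simpa using hs.inv) (by simpa using hl)).inv
  · exact Or.inl fun s hs hl => by
      simpa using (h s⁻¹ (by simpa using hs.inv) (by simpa using hl)).inv

end Isolation

section Nielsen

variable {X : Type*} [DecidableEq X] {M : Set (FreeGroup X)} {u v w x y z : FreeGroup X}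

theorem NielsenReduced.majorInitIsolated (hN : NielsenReduced M) (hw : w ∈ Symbols M) :
    MajorInitIsolated M w := by
  intro s hsw hlt _ v hv hsv
  by_contra hvw
  have hN1 := ((hN w⁻¹ (inv_mem_symbols hw) v hv v hv).2.1
    fun h => hvw (inv_mul_eq_one.1 h).symm).2
  have := norm_inv_mul_add_le_of_initSeg hsw hsv
  omega

theorem NielsenReduced.halfIsolated (hN : NielsenReduced M) (hw : w ∈ Symbols M) :
    HalfIsolated M w := by
  rw [HalfIsolated, or_iff_not_imp_left]
  intro hinit s₂ hs₂ hl₂ v hv hs₂v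
  push Not at hinit
  obtain ⟨s₁, hs₁, hl₁, hiso⟩ := hinit
  simp only [IsolatedInit, not_forall] at hiso
  obtain ⟨u, hu, hs₁u, huw⟩ := hiso
  by_contra hvw
  have hN2 := (hN u⁻¹ (inv_mem_symbols hu) w hw v⁻¹ (inv_mem_symbols hv)).2.2
    (fun h => huw (inv_mul_eq_one.1 h)) (fun h => hvw (mul_inv_eq_one.1 h).symm)
  have hprod : u⁻¹ * w * v⁻¹ = (s₁⁻¹ * u)⁻¹ * (v * s₂⁻¹)⁻¹ := by
    rw [← mul_eq_of_halves hs₁ hs₂ hl₁ hl₂]; group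
  have := norm_mul_le (s₁⁻¹ * u)⁻¹ (v * s₂⁻¹)⁻¹
  rw [← hprod, norm_inv_eq, norm_inv_eq] at this
  rw [norm_inv_eq, norm_inv_eq] at hN2
  have := hs₁u.norm_inv_mul_add
  have := hs₂v.norm_mul_inv_add
  omega

theorem norm_le_norm_mul_of_majorTermIsolated (hu : MajorTermIsolated M u)
    (hv : v ∈ Symbols M) (huv : u * v ≠ 1) : v.norm ≤ (u * v).norm := by
  by_contra! hlt
  obtain ⟨p, c, q, hu', hv', huv'⟩ := exists_toWord_mul_eq u v
  simp only [FreeGroup.norm, hv', huv', List.length_append, invRev_length] at hlt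
  set n := u.norm / 2 + 1
  have hc : c.drop (c.length - n) <:+ c := List.drop_suffix _ _
  have hcu : c.drop (c.length - n) <:+ u.toWord := hc.trans (hu' ▸ List.suffix_append p c)
  have hcv : c.drop (c.length - n) <:+ v⁻¹.toWord := hc.trans <| by
    rw [toWord_inv, hv', invRev_append, invRev_invRev]; exact List.suffix_append _ _
  have hnorm : u.norm = p.length + c.length := by simp [FreeGroup.norm, hu']
  have hs : (mk (c.drop (c.length - n))).norm = n := by
    rw [FreeGroup.norm, toWord_mk_of_isInfix hcu.isInfix, List.length_drop]; omega
  have hvu := hu _ (termSeg_mk hcu) (by omega) (by omega) v⁻¹ (inv_mem_symbols hv)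
    (termSeg_mk hcv)
  exact huv (by rw [← hvu, inv_mul_cancel])

theorem HalfIsolated.mul_eq_one_or_mul_eq_one {p c d q : List (X × Bool)}
    (h : HalfIsolated M y) (hx : x ∈ Symbols M) (hz : z ∈ Symbols M)
    (hx' : x.toWord = p ++ c) (hy : y.toWord = invRev c ++ d) (hz' : z.toWord = invRev d ++ q)
    (hcd : c.length = d.length) : x * y = 1 ∨ y * z = 1 := by
  have hly : y.norm = c.length + d.length := by simp [FreeGroup.norm, hy]
  rcases h with hleft | hright
  · have hyx : x⁻¹ = y := hleft _ (initSeg_mk ⟨d, hy.symm⟩) (by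
        rw [FreeGroup.norm, toWord_mk_of_isInfix (w := y) ⟨[], d, by simp [hy]⟩,
          invRev_length]; omega)
      x⁻¹ (inv_mem_symbols hx) (initSeg_mk ⟨invRev p, by rw [toWord_inv, hx', invRev_append]⟩)
    exact Or.inl (by rw [← hyx, mul_inv_cancel])
  · have hzy : z⁻¹ = y := hright _ (termSeg_mk ⟨invRev c, hy.symm⟩) (by
        rw [FreeGroup.norm, toWord_mk_of_isInfix (w := y) ⟨invRev c, [], by simp [hy]⟩]; omega)
      z⁻¹ (inv_mem_symbols hz)
      (termSeg_mk ⟨invRev q, by rw [toWord_inv, hz', invRev_append, invRev_invRev]⟩)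
    exact Or.inr (by rw [← hzy, inv_mul_cancel])

theorem norm_sub_norm_add_norm_lt_norm_mul_mul (h₁₂ : x.norm ≤ (x * y).norm)
    (h₂₃ : z.norm ≤ (y * z).norm) (hy : Even y.norm → HalfIsolated M y) (hx : x ∈ Symbols M)
    (hz : z ∈ Symbols M) (hxy : x * y ≠ 1) (hyz : y * z ≠ 1) :
    (x.norm : ℤ) - y.norm + z.norm < (x * y * z).norm := by
  obtain ⟨p, c, q₁, hx', hy₁, hxy'⟩ := exists_toWord_mul_eq x y
  obtain ⟨p₂, d, q, hy₂, hz', hyz'⟩ := exists_toWord_mul_eq y z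
  simp only [FreeGroup.norm, hx', hz', hxy', hyz', List.length_append, invRev_length]
    at h₁₂ h₂₃
  have hl₁ : y.norm = c.length + q₁.length := by simp [FreeGroup.norm, hy₁]
  have hl₂ : y.norm = p₂.length + d.length := by simp [FreeGroup.norm, hy₂]
  -- `m` is the part of `y` that survives in `x * y * z`
  obtain ⟨m, hm⟩ := List.exists_eq_append_append_of_append_eq_append (hy₁.symm.trans hy₂)
    (by simp only [List.length_append, invRev_length]; omega)
  have hy' : y.toWord = invRev c ++ m ++ d := hy₁.trans hm
  have hly : y.norm = c.length + m.length + d.length := by simp [FreeGroup.norm, hy', add_assoc]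
  rcases eq_or_ne m [] with rfl | hm₀
  · simp only [List.append_nil, List.length_nil, add_zero] at hy' hly
    rcases (hy ⟨c.length, by omega⟩).mul_eq_one_or_mul_eq_one hx hz hx' hy' hz' (by omega)
      with h | h
    exacts [absurd h hxy, absurd h hyz]
  · have hq₁ : q₁ = m ++ d := by simpa [List.append_assoc] using hm
    have hp₂ : p₂ = invRev c ++ m := List.append_cancel_right (hy₂.symm.trans hy')
    have hxyz := toWord_mul_mul_eq (hxy'.trans (by rw [hq₁, List.append_assoc])) hy'
      (hyz'.trans (by rw [hp₂])) hm₀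
    have hm₁ : 0 < m.length := List.length_pos_iff.2 hm₀
    simp only [FreeGroup.norm, hxyz, hx', hz', hy', List.length_append, invRev_length]
    omega

theorem nielsenReduced_of_isolated (hne : ∀ u ∈ Symbols M, u ≠ 1)
    (hterm : ∀ u ∈ Symbols M, MajorTermIsolated M u)
    (hhalf : ∀ u ∈ Symbols M, Even u.norm → HalfIsolated M u) : NielsenReduced M := by
  have hN1 : ∀ u ∈ Symbols M, ∀ v ∈ Symbols M, u * v ≠ 1 →
      u.norm ≤ (u * v).norm ∧ v.norm ≤ (u * v).norm := by
    intro u hu v hv huv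
    refine ⟨?_, norm_le_norm_mul_of_majorTermIsolated (hterm u hu) hv huv⟩
    have := norm_le_norm_mul_of_majorTermIsolated (hterm v⁻¹ (inv_mem_symbols hv))
      (inv_mem_symbols hu) (by rwa [← mul_inv_rev, inv_ne_one])
    rwa [← mul_inv_rev, norm_inv_eq, norm_inv_eq] at this
  intro v₁ h₁ v₂ h₂ v₃ h₃
  exact ⟨hne v₁ h₁, hN1 v₁ h₁ v₂ h₂, fun h₁₂ h₂₃ => norm_sub_norm_add_norm_lt_norm_mul_mul
    (hN1 v₁ h₁ v₂ h₂ h₁₂).1 (hN1 v₂ h₂ v₃ h₃ h₂₃).2 (hhalf v₂ h₂) h₁ h₃ h₁₂ h₂₃⟩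

end Nielsen

theorem nielsenReduced_iff_segments_isolated_general
    {X : Type*} [DecidableEq X] (M : Finset (FreeGroup X))
    (hnt : ∀ w ∈ M, w ≠ (1 : FreeGroup X)) :
    NielsenReduced (M : Set (FreeGroup X)) ↔
      ((∀ w ∈ M,
          (∀ s : FreeGroup X, InitSeg s w → w.norm < 2 * s.norm →
            2 * s.norm ≤ w.norm + 2 → IsolatedInit (M : Set (FreeGroup X)) s w) ∧
          (∀ s : FreeGroup X, TermSeg s w → w.norm < 2 * s.norm →
            2 * s.norm ≤ w.norm + 2 → IsolatedTerm (M : Set (FreeGroup X)) s w)) ∧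
        (∀ w ∈ M, Even w.norm →
          ((∀ s : FreeGroup X, InitSeg s w → 2 * s.norm = w.norm →
              IsolatedInit (M : Set (FreeGroup X)) s w) ∨
           (∀ s : FreeGroup X, TermSeg s w → 2 * s.norm = w.norm →
              IsolatedTerm (M : Set (FreeGroup X)) s w)))) := by
  constructor
  · intro hN
    have hsym : ∀ w ∈ M, w ∈ Symbols (M : Set (FreeGroup X)) := fun w hw => Or.inl hw
    refine ⟨fun w hw => ⟨hN.majorInitIsolated (hsym w hw), ?_⟩,
      fun w hw _ => hN.halfIsolated (hsym w hw)⟩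
    have := (hN.majorInitIsolated (inv_mem_symbols (hsym w hw))).inv
    rwa [inv_inv] at this
  · rintro ⟨hmajor, hhalf⟩
    refine nielsenReduced_of_isolated ?_ ?_ ?_ <;> rw [forall_mem_symbols]
    · exact fun w hw => ⟨hnt w hw, inv_ne_one.2 (hnt w hw)⟩
    · exact fun w hw => ⟨(hmajor w hw).2, MajorInitIsolated.inv (hmajor w hw).1⟩
    · exact fun w hw => ⟨hhalf w hw, fun he => HalfIsolated.inv (hhalf w hw (by simpa using he))⟩

/-- A set `M` of nontrivial freely reduced words is Nielsen reduced if and only if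
(1) the major initial and major terminal segments of each `w ∈ M` are isolated, and
(2) for each `w ∈ M` of even free length, either its left half or its right half is
isolated.  (A major initial segment of `w` is an initial segment `s` with
`|w|/2 < |s| ≤ |w|/2 + 1`, i.e. `|w| < 2|s| ≤ |w| + 2`; the left (right) half of `w`
of even length is the initial (terminal) segment of length `|w|/2`.) -/
theorem nielsenReduced_iff_segments_isolated
    {X : Type*} [Fintype X] [DecidableEq X] (M : Finset (FreeGroup X))
    (hnt : ∀ w ∈ M, w ≠ (1 : FreeGroup X)) :
    NielsenReduced (M : Set (FreeGroup X)) ↔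
      ((∀ w ∈ M,
          (∀ s : FreeGroup X, InitSeg s w → w.norm < 2 * s.norm →
            2 * s.norm ≤ w.norm + 2 → IsolatedInit (M : Set (FreeGroup X)) s w) ∧
          (∀ s : FreeGroup X, TermSeg s w → w.norm < 2 * s.norm →
            2 * s.norm ≤ w.norm + 2 → IsolatedTerm (M : Set (FreeGroup X)) s w)) ∧
        (∀ w ∈ M, Even w.norm →
          ((∀ s : FreeGroup X, InitSeg s w → 2 * s.norm = w.norm →
              IsolatedInit (M : Set (FreeGroup X)) s w) ∨
           (∀ s : FreeGroup X, TermSeg s w → 2 * s.norm = w.norm →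
              IsolatedTerm (M : Set (FreeGroup X)) s w)))) :=
  nielsenReduced_iff_segments_isolated_general M hnt
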